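/- arXiv:1104.0943 — 6 statements merged into one kernel-verified Lean document; each statement's English description precedes it below -/
import Mathlib

section
/- Let k be a field and let f, g ∈ k[X] be linearly independent over k (i.e., there is no pair (c₁, c₂) ≠ (0,0) in k² with c₁·f = c₂·g; equivalently the rational function f/g is nonconstant). Set d = max(natDegree f, natDegree g). Then the polynomial ∑_{i=0}^{d−1} (coeff d f · coeff i g − coeff i f · coeff d g) · X^i is not the zero polynomial. -/
open Polynomial

/-- If `f, g` are linearly independent over `k`, then the polynomial
`∑_{i<d} (a_d b_i − a_i b_d) X^i` (with `d = max(deg f, deg g)`) is nonzero. -/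
theorem stmt2 {k : Type*} [Field k] (f g : Polynomial k)
    (hind : ∀ c₁ c₂ : k, C c₁ * f = C c₂ * g → c₁ = 0 ∧ c₂ = 0) :
    (∑ i ∈ Finset.range (max f.natDegree g.natDegree),
        C (f.coeff (max f.natDegree g.natDegree) * g.coeff i -
            f.coeff i * g.coeff (max f.natDegree g.natDegree)) * X ^ i) ≠ 0 := by
  intro h
  set d := max f.natDegree g.natDegree with hd
  have key : ∀ i, i < d → f.coeff d * g.coeff i - f.coeff i * g.coeff d = 0 := by
    intro i hi
    have h' := congrArg (fun p => Polynomial.coeff p i) h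
    simp only [Polynomial.finset_sum_coeff, Polynomial.coeff_C_mul,
      Polynomial.coeff_X_pow, mul_ite, mul_one, mul_zero, Finset.sum_ite_eq,
      Finset.sum_ite_eq', Finset.mem_range, hi, if_true, Polynomial.coeff_zero] at h'
    exact h'
  have hbd : C (g.coeff d) * f = C (f.coeff d) * g := by
    ext i
    simp only [Polynomial.coeff_C_mul]
    rcases lt_trichotomy i d with hlt | heq | hgt
    · linear_combination -key i hlt
    · subst heq; ring
    · have hf : f.coeff i = 0 :=
        Polynomial.coeff_eq_zero_of_natDegree_lt (lt_of_le_of_lt (le_max_left _ _) hgt)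
      have hg : g.coeff i = 0 :=
        Polynomial.coeff_eq_zero_of_natDegree_lt (lt_of_le_of_lt (le_max_right _ _) hgt)
      simp [hf, hg]
  obtain ⟨h1, h2⟩ := hind _ _ hbd
  have hf0 : f = 0 ∨ g = 0 := by
    rcases max_choice f.natDegree g.natDegree with hm | hm
    · left
      have : f.leadingCoeff = 0 := by rwa [Polynomial.leadingCoeff, ← hm, ← hd]
      exact Polynomial.leadingCoeff_eq_zero.mp this
    · right
      have : g.leadingCoeff = 0 := by rwa [Polynomial.leadingCoeff, ← hm, ← hd]
      exact Polynomial.leadingCoeff_eq_zero.mp this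
  rcases hf0 with hf | hg
  · exact one_ne_zero (hind 1 0 (by simp [hf])).1
  · exact one_ne_zero (hind 0 1 (by simp [hg])).2
end

section
/- Let k be an algebraically closed field of characteristic zero, complete with respect to a non-Archimedean (ultrametric) multiplicative norm ‖·‖, and let p be a prime with ‖(p : k)‖ < 1. Let f, g ∈ k[X] be coprime polynomials with d = max(natDegree f, natDegree g) and p ≤ d. Assume: (i) g.eval x ≠ 0 for every x ∈ k with ‖x‖ < 1 (φ = f/g has no pole in the open unit disk), and (ii) (derivative f · g − f · derivative g).eval x ≠ 0 for every x ∈ k with ‖x‖ < 1 (φ has no critical point in the open unit disk). Then φ is injective on the open disk of radius r_p = ‖(p : k)‖^(1/(p−1)): for all x, y ∈ k with ‖x‖ < ‖(p : k)‖^((1 : ℝ)/(p−1)) and ‖y‖ < ‖(p : k)‖^((1 : ℝ)/(p−1)), if f.eval x · g.eval y = f.eval y · g.eval x then x = y. -/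
/-!
Translate so that `y = 0` and replace `φ` by `h = g(y) f - f(y) g`, so that it suffices to show
that `H(u) = h(y + u)` has no zero with `0 < ‖u‖ < ρ`, where `ρ = ‖p‖^(1/(p-1))`. As power series,
`ψ = H / G` (with `G(u) = g(y + u)`) has derivative `Ω / G²`, with `Ω` the shifted Wronskian.
A polynomial without zeros in the open unit disk has all its coefficients dominated by its
constant one (its roots have norm at least `1`); this property survives products and inverses
of power series, so it holds for `ψ'`, i.e. `‖ψₙ‖ ‖n‖ ≤ ‖ψ₁‖`. Since `‖n‖ ≥ ρ^(n-1)`,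
the linear term of `ψ` dominates on the disk of radius `ρ`; multiplying back by `G` this
domination passes to `H`, so `‖H(u)‖ = ‖H₁‖ ‖u‖ ≠ 0`.
-/

open Polynomial

theorem Polynomial.derivative_taylor {R : Type*} [CommSemiring R] (r : R) (f : R[X]) :
    derivative (taylor r f) = taylor r (derivative f) := by
  simp [taylor_apply, derivative_comp]

theorem PowerSeries.derivative_mul_inv {k : Type*} [Field k] {A B : PowerSeries k}
    (hB : constantCoeff B ≠ 0) :
    derivative k (A * B⁻¹) = (derivative k A * B - A * derivative k B) * B⁻¹ * B⁻¹ := by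
  rw [Derivation.leibniz, derivative_inv', smul_eq_mul, smul_eq_mul]
  linear_combination (-(B⁻¹ * derivative k A)) * PowerSeries.mul_inv_cancel B hB

theorem PowerSeries.norm_coeff_mul_pow_le_of_derivative {k : Type*} [NormedField k]
    {A : PowerSeries k} {R α : ℝ} (hR0 : 0 ≤ R) (hR : ∀ n : ℕ, R ^ n ≤ ‖((n + 1 : ℕ) : k)‖)
    (hA0 : constantCoeff A = 0) (hA : ∀ n, ‖coeff n (derivative k A)‖ ≤ α) (n : ℕ) :
    ‖coeff n A‖ * R ^ n ≤ α * R := by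
  rcases n with _ | n
  · simpa [hA0] using mul_nonneg ((norm_nonneg _).trans (hA 0)) hR0
  · calc ‖coeff (n + 1) A‖ * R ^ (n + 1) = ‖coeff (n + 1) A‖ * R ^ n * R := by ring
      _ ≤ ‖coeff (n + 1) A‖ * ‖((n + 1 : ℕ) : k)‖ * R := by gcongr; exact hR n
      _ ≤ α * R := by
        gcongr
        simpa [coeff_derivative] using hA n

section Ultrametric

variable {k : Type*} [NormedField k] [IsUltrametricDist k]

theorem norm_natCast_eq_one_of_not_dvd {p m : ℕ} (hp : p.Prime) (hpk : ‖(p : k)‖ < 1)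
    (hm : ¬ p ∣ m) : ‖(m : k)‖ = 1 := by
  obtain ⟨a, b, hab⟩ := Nat.isCoprime_iff_coprime.mpr ((Nat.Prime.coprime_iff_not_dvd hp).mpr hm)
  have hbezout : (a : k) * p + (b : k) * m = 1 := by exact_mod_cast congrArg (Int.cast : ℤ → k) hab
  refine le_antisymm (IsUltrametricDist.norm_natCast_le_one k m) (not_lt.mp fun hlt => ?_)
  have hsmall : ‖(a : k) * p + (b : k) * m‖ < 1 := by
    refine (IsUltrametricDist.norm_add_le_max _ _).trans_lt (max_lt ?_ ?_) <;> rw [norm_mul]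
    · exact mul_lt_one_of_nonneg_of_lt_one_right (IsUltrametricDist.norm_intCast_le_one k a)
        (norm_nonneg _) hpk
    · exact mul_lt_one_of_nonneg_of_lt_one_right (IsUltrametricDist.norm_intCast_le_one k b)
        (norm_nonneg _) hlt
  simp [hbezout] at hsmall

theorem rpow_pow_le_norm_natCast_succ {p : ℕ} (hp : p.Prime) (hpk : ‖(p : k)‖ < 1) (n : ℕ) :
    (‖(p : k)‖ ^ ((1 : ℝ) / ((p : ℝ) - 1))) ^ n ≤ ‖((n + 1 : ℕ) : k)‖ := by
  set v := (n + 1).factorization p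
  have hp1 : (1 : ℝ) < p := by exact_mod_cast hp.one_lt
  have hnorm : ‖((n + 1 : ℕ) : k)‖ = ‖(p : k)‖ ^ v := by
    rw [← Nat.ordProj_mul_ordCompl_eq_self (n + 1) p, Nat.cast_mul, norm_mul, Nat.cast_pow,
      norm_pow, norm_natCast_eq_one_of_not_dvd hp hpk (Nat.not_dvd_ordCompl hp n.succ_ne_zero),
      mul_one]
  -- Bernoulli: `1 + v (p - 1) ≤ p ^ v ≤ n + 1`.
  have hv : (v : ℝ) ≤ n * (1 / ((p : ℝ) - 1)) := by
    have hpow : ((p ^ v : ℕ) : ℝ) ≤ n + 1 := by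
      exact_mod_cast Nat.le_of_dvd n.succ_pos (Nat.ordProj_dvd (n + 1) p)
    have := one_add_mul_sub_le_pow (a := (p : ℝ)) (by linarith) v
    rw [mul_one_div, le_div_iff₀ (by linarith)]
    push_cast at hpow
    linarith
  rw [hnorm, ← Real.rpow_natCast, ← Real.rpow_natCast, ← Real.rpow_mul (norm_nonneg _), mul_comm]
  exact Real.rpow_le_rpow_of_exponent_ge' (norm_nonneg _) hpk.le (Nat.cast_nonneg _) hv

namespace PowerSeries

theorem norm_coeff_mul_mul_pow_le {A B : PowerSeries k} {R α β : ℝ} (hR : 0 ≤ R)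
    (hA : ∀ n, ‖coeff n A‖ * R ^ n ≤ α) (hB : ∀ n, ‖coeff n B‖ * R ^ n ≤ β) (n : ℕ) :
    ‖coeff n (A * B)‖ * R ^ n ≤ α * β := by
  rw [coeff_mul]
  obtain ⟨⟨i, j⟩, hij, hle⟩ := IsUltrametricDist.exists_norm_finsetSum_le_of_nonempty
    (t := Finset.HasAntidiagonal.antidiagonal n) ⟨(0, n), by simp⟩
    fun x => coeff x.1 A * coeff x.2 B
  have hn : n = i + j := (Finset.HasAntidiagonal.mem_antidiagonal.mp hij).symm
  calc _ ≤ ‖coeff i A * coeff j B‖ * R ^ n := by gcongr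
    _ = (‖coeff i A‖ * R ^ i) * (‖coeff j B‖ * R ^ j) := by rw [hn, norm_mul, pow_add]; ring
    _ ≤ α * β := mul_le_mul (hA i) (hB j) (by positivity)
      ((mul_nonneg (norm_nonneg _) (pow_nonneg hR i)).trans (hA i))

theorem norm_coeff_mul_le {A B : PowerSeries k} {α β : ℝ}
    (hA : ∀ n, ‖coeff n A‖ ≤ α) (hB : ∀ n, ‖coeff n B‖ ≤ β) (n : ℕ) :
    ‖coeff n (A * B)‖ ≤ α * β := by
  simpa using norm_coeff_mul_mul_pow_le zero_le_one (by simpa using hA) (by simpa using hB) n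

theorem norm_coeff_inv_le {G : PowerSeries k} (hG0 : constantCoeff G ≠ 0)
    (hG : ∀ n, ‖coeff n G‖ ≤ ‖constantCoeff G‖) (n : ℕ) :
    ‖coeff n G⁻¹‖ ≤ ‖constantCoeff G‖⁻¹ := by
  induction n using Nat.strong_induction_on with
  | _ n ih =>
    rw [coeff_inv]
    split_ifs with hn
    · rw [norm_inv]
    · rw [norm_mul, norm_neg, norm_inv]
      refine mul_le_of_le_one_right (by positivity) ?_
      refine IsUltrametricDist.norm_sum_le_of_forall_le_of_nonneg zero_le_one fun ij _ => ?_
      split_ifs with hij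
      · rw [norm_mul, ← mul_inv_cancel₀ (norm_ne_zero_iff.mpr hG0)]
        exact mul_le_mul (hG _) (ih _ hij) (norm_nonneg _) (norm_nonneg _)
      · simp

end PowerSeries

namespace Polynomial

theorem norm_coeff_X_sub_C_mul_le {P : k[X]} {r : k} (hr : 1 ≤ ‖r‖)
    (hP : ∀ n, ‖P.coeff n‖ ≤ ‖P.coeff 0‖) (n : ℕ) :
    ‖((X - C r) * P).coeff n‖ ≤ ‖((X - C r) * P).coeff 0‖ := by
  have hcoeff0 : ‖((X - C r) * P).coeff 0‖ = ‖r‖ * ‖P.coeff 0‖ := by simp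
  rcases n with _ | n
  · exact le_rfl
  rw [coeff_X_sub_C_mul, hcoeff0, sub_eq_add_neg]
  refine (IsUltrametricDist.norm_add_le_max _ _).trans (max_le ?_ ?_)
  · exact (hP n).trans (le_mul_of_one_le_left (norm_nonneg _) hr)
  · rw [norm_neg, norm_mul]
    exact mul_le_mul_of_nonneg_left (hP _) (norm_nonneg _)

theorem norm_coeff_multiset_prod_X_sub_C_le (s : Multiset k) (hs : ∀ r ∈ s, 1 ≤ ‖r‖) (n : ℕ) :
    ‖(s.map (X - C ·)).prod.coeff n‖ ≤ ‖(s.map (X - C ·)).prod.coeff 0‖ := by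
  induction s using Multiset.induction generalizing n with
  | empty => rw [Multiset.map_zero, Multiset.prod_zero, coeff_one]; split_ifs <;> simp
  | cons r s ih =>
    rw [Multiset.map_cons, Multiset.prod_cons]
    exact norm_coeff_X_sub_C_mul_le (hs r (Multiset.mem_cons_self r s))
      (ih fun r hr => hs r (Multiset.mem_cons_of_mem hr)) n

theorem norm_coeff_le_norm_coeff_zero [IsAlgClosed k] {q : k[X]}
    (hq : ∀ z : k, ‖z‖ < 1 → q.eval z ≠ 0) (n : ℕ) : ‖q.coeff n‖ ≤ ‖q.coeff 0‖ := by
  have hroots : ∀ r ∈ q.roots, 1 ≤ ‖r‖ := fun r hr =>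
    not_lt.mp fun hlt => hq r hlt (isRoot_of_mem_roots hr)
  rw [(IsAlgClosed.splits q).eq_prod_roots, coeff_C_mul, coeff_C_mul, norm_mul, norm_mul]
  exact mul_le_mul_of_nonneg_left (norm_coeff_multiset_prod_X_sub_C_le _ hroots n) (norm_nonneg _)

theorem norm_eval_eq_of_norm_coeff_mul_pow_le {H : k[X]} {R : ℝ} (hH0 : H.coeff 0 = 0)
    (hH : ∀ n, ‖H.coeff n‖ * R ^ n ≤ ‖H.coeff 1‖ * R) {u : k} (hu : ‖u‖ < R) :
    ‖H.eval u‖ = ‖H.coeff 1‖ * ‖u‖ := by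
  have hR : 0 < R := (norm_nonneg u).trans_lt hu
  set t := ‖u‖ / R
  have ht0 : 0 ≤ t := by positivity
  have ht1 : t < 1 := (div_lt_one hR).mpr hu
  have hrest : ‖∑ n ∈ (Finset.range (H.natDegree + 2)).erase 1, H.coeff n * u ^ n‖ ≤
      ‖H.coeff 1 * u‖ * t := by
    refine IsUltrametricDist.norm_sum_le_of_forall_le_of_nonneg (by positivity) fun n hn => ?_
    rcases n with _ | _ | n
    · simp [hH0]; positivity
    · simp at hn
    · have hu' : ‖u‖ = t * R := (div_mul_cancel₀ _ hR.ne').symm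
      calc ‖H.coeff (n + 2) * u ^ (n + 2)‖
          = ‖H.coeff (n + 2)‖ * R ^ (n + 2) * t ^ (n + 2) := by
            rw [norm_mul, norm_pow, hu']; ring
        _ ≤ ‖H.coeff 1‖ * R * t ^ (n + 2) := mul_le_mul_of_nonneg_right (hH _) (by positivity)
        _ ≤ ‖H.coeff 1‖ * R * t ^ 2 :=
          mul_le_mul_of_nonneg_left (pow_le_pow_of_le_one ht0 ht1.le (by omega)) (by positivity)
        _ = ‖H.coeff 1 * u‖ * t := by rw [norm_mul, hu']; ring
  rw [eval_eq_sum_range' (n := H.natDegree + 2) (by omega),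
    ← Finset.add_sum_erase _ _ (by simp : 1 ∈ Finset.range (H.natDegree + 2)), pow_one,
    ← norm_mul]
  rcases eq_or_ne (H.coeff 1 * u) 0 with h0 | h0
  · rw [h0, norm_zero, zero_mul] at hrest
    rw [h0, zero_add, norm_zero, norm_le_zero_iff.mp hrest, norm_zero]
  · have hlt := hrest.trans_lt (mul_lt_of_lt_one_right (norm_pos_iff.mpr h0) ht1)
    rw [IsUltrametricDist.norm_add_eq_max_of_norm_ne_norm hlt.ne', max_eq_left hlt.le]

theorem norm_coeff_mul_pow_le_of_no_pole_of_no_critical_point [IsAlgClosed k] {R : ℝ}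
    (hR0 : 0 ≤ R) (hR : ∀ n : ℕ, R ^ n ≤ ‖((n + 1 : ℕ) : k)‖) {H G : k[X]}
    (hH0 : H.coeff 0 = 0) (hG : ∀ z : k, ‖z‖ < 1 → G.eval z ≠ 0)
    (hW : ∀ z : k, ‖z‖ < 1 → (derivative H * G - H * derivative G).eval z ≠ 0) (n : ℕ) :
    ‖H.coeff n‖ * R ^ n ≤ ‖H.coeff 1‖ * R := by
  set Ω := derivative H * G - H * derivative G
  have hG0 : G.coeff 0 ≠ 0 := by simpa [coeff_zero_eq_eval_zero] using hG 0 (by simp)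
  have hGs0 : PowerSeries.constantCoeff (G : PowerSeries k) ≠ 0 := by simpa using hG0
  have hΩ0 : Ω.coeff 0 = H.coeff 1 * G.coeff 0 := by
    simp [Ω, mul_coeff_zero, coeff_derivative, hH0]
  have hR1 : R ≤ 1 := by simpa using (hR 1).trans (IsUltrametricDist.norm_natCast_le_one k 2)
  set ψ := (H : PowerSeries k) * (G : PowerSeries k)⁻¹
  have hψ' : ∀ n, ‖PowerSeries.coeff n (PowerSeries.derivative k ψ)‖ ≤
      ‖Ω.coeff 0‖ * ‖G.coeff 0‖⁻¹ * ‖G.coeff 0‖⁻¹ := by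
    have hGinv :=
      PowerSeries.norm_coeff_inv_le hGs0 (by simpa using norm_coeff_le_norm_coeff_zero hG)
    rw [Polynomial.constantCoeff_coe] at hGinv
    rw [PowerSeries.derivative_mul_inv hGs0, PowerSeries.derivative_coe, PowerSeries.derivative_coe,
      ← coe_mul, ← coe_mul, ← coe_sub]
    refine PowerSeries.norm_coeff_mul_le (PowerSeries.norm_coeff_mul_le ?_ hGinv) hGinv
    intro n
    rw [Polynomial.coeff_coe]
    exact norm_coeff_le_norm_coeff_zero hW n
  have hψ := PowerSeries.norm_coeff_mul_pow_le_of_derivative hR0 hR (by simp [ψ, hH0]) hψ'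
  have hGR : ∀ n, ‖PowerSeries.coeff n (G : PowerSeries k)‖ * R ^ n ≤ ‖G.coeff 0‖ := fun n => by
    rw [Polynomial.coeff_coe]
    exact (mul_le_of_le_one_right (norm_nonneg _) (pow_le_one₀ hR0 hR1)).trans
      (norm_coeff_le_norm_coeff_zero hG n)
  have hψG : ψ * G = H := by rw [mul_assoc, PowerSeries.inv_mul_cancel _ hGs0, mul_one]
  have hH := PowerSeries.norm_coeff_mul_mul_pow_le hR0 hψ hGR n
  rw [hψG, Polynomial.coeff_coe, hΩ0, norm_mul] at hH
  convert hH using 1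
  field_simp

theorem eval_ne_zero_of_no_pole_of_no_critical_point [IsAlgClosed k] {R : ℝ}
    (hR : ∀ n : ℕ, R ^ n ≤ ‖((n + 1 : ℕ) : k)‖) {H G : k[X]}
    (hH0 : H.coeff 0 = 0) (hG : ∀ z : k, ‖z‖ < 1 → G.eval z ≠ 0)
    (hW : ∀ z : k, ‖z‖ < 1 → (derivative H * G - H * derivative G).eval z ≠ 0) {u : k}
    (hu : ‖u‖ < R) (hu0 : u ≠ 0) : H.eval u ≠ 0 := by
  have hH1 : H.coeff 1 ≠ 0 := left_ne_zero_of_mul <| by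
    simpa [← coeff_zero_eq_eval_zero, mul_coeff_zero, coeff_derivative, hH0] using hW 0 (by simp)
  have hdom := norm_coeff_mul_pow_le_of_no_pole_of_no_critical_point
    ((norm_nonneg u).trans hu.le) hR hH0 hG hW
  rw [← norm_ne_zero_iff, norm_eval_eq_of_norm_coeff_mul_pow_le hH0 hdom hu]
  exact mul_ne_zero (norm_ne_zero_iff.mpr hH1) (norm_ne_zero_iff.mpr hu0)

theorem eval_taylor_ne_zero {q : k[X]} (hq : ∀ z : k, ‖z‖ < 1 → q.eval z ≠ 0) {y : k}
    (hy : ‖y‖ < 1) {z : k} (hz : ‖z‖ < 1) : (taylor y q).eval z ≠ 0 := by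
  rw [taylor_eval]
  exact hq _ ((IsUltrametricDist.norm_add_le_max z y).trans_lt (max_lt hz hy))

end Polynomial

end Ultrametric

theorem stmt4_general {k : Type*} [NormedField k] [IsAlgClosed k] [IsUltrametricDist k]
    (p : ℕ) (hp : p.Prime) (hpk : ‖(p : k)‖ < 1)
    (f g : Polynomial k)
    (hpole : ∀ x : k, ‖x‖ < 1 → g.eval x ≠ 0)
    (hcrit : ∀ x : k, ‖x‖ < 1 → (derivative f * g - f * derivative g).eval x ≠ 0) :
    ∀ x y : k, ‖x‖ < ‖(p : k)‖ ^ ((1 : ℝ) / ((p : ℝ) - 1)) →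
      ‖y‖ < ‖(p : k)‖ ^ ((1 : ℝ) / ((p : ℝ) - 1)) →
      f.eval x * g.eval y = f.eval y * g.eval x → x = y := by
  intro x y hx hy hxy
  have hρ1 : ‖(p : k)‖ ^ ((1 : ℝ) / ((p : ℝ) - 1)) ≤ 1 := by
    simpa using (rpow_pow_le_norm_natCast_succ hp hpk 1).trans
      (IsUltrametricDist.norm_natCast_le_one k 2)
  have hy1 : ‖y‖ < 1 := hy.trans_le hρ1
  set h := C (g.eval y) * f - C (f.eval y) * g
  have hWh : derivative h * g - h * derivative g =
      C (g.eval y) * (derivative f * g - f * derivative g) := by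
    simp only [h, derivative_sub, derivative_mul, derivative_C, zero_mul, zero_add]
    ring
  have hW : ∀ z : k, ‖z‖ < 1 → (derivative (taylor y h) * taylor y g -
      taylor y h * derivative (taylor y g)).eval z ≠ 0 := fun z hz => by
    rw [derivative_taylor, derivative_taylor, ← taylor_mul, ← taylor_mul, ← map_sub, hWh,
      taylor_eval, eval_mul, eval_C]
    exact mul_ne_zero (hpole y hy1)
      (hcrit _ ((IsUltrametricDist.norm_add_le_max z y).trans_lt (max_lt hz hy1)))
  by_contra hne
  refine eval_ne_zero_of_no_pole_of_no_critical_point (rpow_pow_le_norm_natCast_succ hp hpk)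
    (by simp [taylor_coeff_zero, h, mul_comm]) (fun z hz => eval_taylor_ne_zero hpole hy1 hz) hW
    (u := x - y) ?_ (sub_ne_zero.mpr hne) ?_
  · rw [sub_eq_add_neg]
    exact (IsUltrametricDist.norm_add_le_max x (-y)).trans_lt (max_lt hx (by rwa [norm_neg]))
  · rw [taylor_eval, sub_add_cancel]
    simp only [h, eval_sub, eval_mul, eval_C]
    linear_combination hxy

/-- Non-Archimedean Rolle theorem (Robert / Prop. 3.1): if `φ = f/g` has no pole and
no critical point in the open unit disk, then `φ` is injective on the open disk of
radius `‖p‖^(1/(p−1))`. -/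
theorem stmt4 {k : Type*} [NormedField k] [IsAlgClosed k] [CharZero k]
    [CompleteSpace k] [IsUltrametricDist k]
    (p : ℕ) (hp : p.Prime) (hpk : ‖(p : k)‖ < 1)
    (f g : Polynomial k) (hco : IsCoprime f g)
    (hpd : p ≤ max f.natDegree g.natDegree)
    (hpole : ∀ x : k, ‖x‖ < 1 → g.eval x ≠ 0)
    (hcrit : ∀ x : k, ‖x‖ < 1 → (derivative f * g - f * derivative g).eval x ≠ 0) :
    ∀ x y : k, ‖x‖ < ‖(p : k)‖ ^ ((1 : ℝ) / ((p : ℝ) - 1)) →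
      ‖y‖ < ‖(p : k)‖ ^ ((1 : ℝ) / ((p : ℝ) - 1)) →
      f.eval x * g.eval y = f.eval y * g.eval x → x = y :=
  stmt4_general p hp hpk f g hpole hcrit
end

section
/- Let k be an algebraically closed field of characteristic zero, complete with respect to a non-Archimedean multiplicative norm ‖·‖. Let f, g ∈ k[X] be coprime polynomials with d = max(natDegree f, natDegree g) ≥ 1, and assume ‖(q : k)‖ = 1 for every prime q ≤ d. Let a ∈ k and r ≥ 0. If for every w ∈ k there exists x with ‖x − a‖ ≤ r and f.eval x = w · g.eval x, and moreover there exists x with ‖x − a‖ ≤ r and g.eval x = 0 (so φ = f/g maps D(a,r) onto P¹(k)), then there exists c ∈ k with ‖c − a‖ ≤ r and (derivative f · g − f · derivative g).eval c = 0. -/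
/-!
Translate the disk to `D(0, r)` and measure polynomials by the Gauss norm `‖P‖_r = max ‖pᵢ‖ rⁱ`;
the dominant degree of `P` is the last index at which this maximum is attained. A polynomial of
dominant degree `0` has no zero in the disk, and over an algebraically closed field the converse
holds as well. Every member `s g + t f` of the pencil vanishes in the disk, so after replacing `f`
by `w = f - λ g` (which leaves the Wronskian unchanged) the dominant degrees `p` of `g` and `q` of
`w` are positive and distinct. The coefficient of index `p + q - 1` of `W(g, w)` then has size
exactly `‖g‖_r ‖w‖_r / r^(p+q)`, because `‖(p - q : k)‖ = 1` by the assumption on the residue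
characteristic, whereas its constant coefficient has size at most `‖g‖_r ‖w‖_r / r`. So the constant
term of the Wronskian is not dominant, and the Wronskian vanishes in the disk.
-/

open Polynomial Finset

section CommRing

variable {R : Type*} [CommRing R]

theorem Polynomial.coeff_wronskian (u v : R[X]) (s : ℕ) :
    (wronskian u v).coeff s =
      ∑ x ∈ antidiagonal (s + 1), ((x.2 : R) - x.1) * (u.coeff x.1 * v.coeff x.2) := by
  have hleft : (u * derivative v).coeff s =
      ∑ x ∈ antidiagonal (s + 1), (x.2 : R) * (u.coeff x.1 * v.coeff x.2) := by
    rw [coeff_mul, Nat.sum_antidiagonal_succ' (f := fun x ↦ (x.2 : R) * (u.coeff x.1 * v.coeff x.2))]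
    simp only [coeff_derivative, Nat.cast_zero, zero_mul, zero_add]
    refine Finset.sum_congr rfl fun x _ ↦ ?_
    push_cast
    ring
  have hright : (derivative u * v).coeff s =
      ∑ x ∈ antidiagonal (s + 1), (x.1 : R) * (u.coeff x.1 * v.coeff x.2) := by
    rw [coeff_mul, Nat.sum_antidiagonal_succ (f := fun x ↦ (x.1 : R) * (u.coeff x.1 * v.coeff x.2))]
    simp only [coeff_derivative, Nat.cast_zero, zero_mul, zero_add]
    refine Finset.sum_congr rfl fun x _ ↦ ?_
    push_cast
    ring
  rw [wronskian, coeff_sub, hleft, hright, ← Finset.sum_sub_distrib]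
  exact Finset.sum_congr rfl fun x _ ↦ by ring

theorem Polynomial.wronskian_sub_C_mul_right (u v : R[X]) (c : R) :
    wronskian u (v - C c * u) = wronskian u v := by
  simp only [wronskian, derivative_sub, derivative_mul, derivative_C, zero_mul, zero_add]
  ring

theorem Polynomial.wronskian_taylor (u v : R[X]) (a : R) :
    wronskian (taylor a u) (taylor a v) = taylor a (wronskian u v) := by
  simp [taylor_apply, wronskian, derivative_comp, sub_comp, mul_comp]

end CommRing

section Field

variable {K : Type*} [Field K]

theorem IsCoprime.ne_zero_and_forall_ne_C_mul {u v : K[X]}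
    (h : IsCoprime u v) (hd : 1 ≤ max u.natDegree v.natDegree) : u ≠ 0 ∧ ∀ c, v ≠ C c * u := by
  refine ⟨?_, fun c hv ↦ ?_⟩
  · rintro rfl
    have hv := natDegree_eq_zero_of_isUnit (isCoprime_zero_left.mp h)
    simp_all
  · subst hv
    have hu := natDegree_eq_zero_of_isUnit (h.isUnit_of_dvd (dvd_mul_left u (C c)))
    have := natDegree_C_mul_le c u
    omega

theorem Polynomial.exists_eval_C_mul_add_C_mul_eq_zero {f g : K[X]} {D : K → Prop}
    (honto : ∀ w : K, ∃ x, D x ∧ f.eval x = w * g.eval x) (hinfty : ∃ x, D x ∧ g.eval x = 0)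
    (s t : K) : ∃ x, D x ∧ (C s * g + C t * f).eval x = 0 := by
  rcases eq_or_ne t 0 with rfl | ht
  · obtain ⟨x, hx, hgx⟩ := hinfty
    exact ⟨x, hx, by simp [hgx]⟩
  · obtain ⟨x, hx, hfx⟩ := honto (-s / t)
    refine ⟨x, hx, ?_⟩
    simp only [eval_add, eval_mul, eval_C, hfx]
    field_simp
    ring

end Field

section NormedField

variable {k : Type*} [NormedField k] {r : ℝ} {P : k[X]}

@[simp]
theorem NormedField.toAbsoluteValue_apply (x : k) : NormedField.toAbsoluteValue k x = ‖x‖ := rfl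

theorem norm_natCast_eq_one_of_forall_prime {n : ℕ}
    (h : ∀ q : ℕ, q.Prime → q ≤ n → ‖(q : k)‖ = 1) {m : ℕ} (hm : m ≠ 0) (hmn : m ≤ n) :
    ‖(m : k)‖ = 1 := by
  induction m using Nat.recOnMul with
  | zero => exact absurd rfl hm
  | one => simp
  | prime q hq => exact h q hq hmn
  | mul a b iha ihb =>
    have ha : a ≠ 0 := left_ne_zero_of_mul hm
    have hb : b ≠ 0 := right_ne_zero_of_mul hm
    rw [Nat.cast_mul, norm_mul, iha ha ((Nat.le_mul_of_pos_right a hb.bot_lt).trans hmn),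
      ihb hb ((Nat.le_mul_of_pos_left b ha.bot_lt).trans hmn), one_mul]

theorem norm_natCast_sub_natCast_eq_one_of_forall_prime {n : ℕ}
    (h : ∀ q : ℕ, q.Prime → q ≤ n → ‖(q : k)‖ = 1) {p q : ℕ} (hp : p ≤ n) (hq : q ≤ n)
    (hne : p ≠ q) : ‖(p : k) - q‖ = 1 := by
  rcases hne.lt_or_gt with hlt | hgt
  · rw [norm_sub_rev, ← Nat.cast_sub hlt.le]
    exact norm_natCast_eq_one_of_forall_prime h (by omega) (by omega)
  · rw [← Nat.cast_sub hgt.le]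
    exact norm_natCast_eq_one_of_forall_prime h (by omega) (by omega)

namespace Polynomial

/-- The dominant (Weierstrass) degree of `P` on the closed disk of radius `r` about `0`; it is the
number of zeros of `P` in that disk. -/
noncomputable def dominantDegree (r : ℝ) (P : k[X]) : ℕ :=
  Nat.findGreatest (fun i ↦ ‖P.coeff i‖ * r ^ i = P.gaussNorm (NormedField.toAbsoluteValue k) r)
    P.natDegree

theorem norm_coeff_mul_pow_le_gaussNorm (hr : 0 ≤ r) (i : ℕ) :
    ‖P.coeff i‖ * r ^ i ≤ P.gaussNorm (NormedField.toAbsoluteValue k) r := by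
  simpa using P.le_gaussNorm (NormedField.toAbsoluteValue k) hr i

theorem gaussNorm_pos (hr : 0 < r) (hP : P ≠ 0) :
    0 < P.gaussNorm (NormedField.toAbsoluteValue k) r :=
  (gaussNorm_nonneg _ _ hr.le).lt_of_ne'
    (mt (gaussNorm_eq_zero_iff _ _ (fun _ ↦ by simp) hr).mp hP)

theorem dominantDegree_le_natDegree : dominantDegree r P ≤ P.natDegree :=
  Nat.findGreatest_le _

theorem norm_coeff_dominantDegree_mul_pow (hr : 0 ≤ r) :
    ‖P.coeff (dominantDegree r P)‖ * r ^ dominantDegree r P =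
      P.gaussNorm (NormedField.toAbsoluteValue k) r := by
  have hattained : ∃ i ≤ P.natDegree,
      ‖P.coeff i‖ * r ^ i = P.gaussNorm (NormedField.toAbsoluteValue k) r := by
    obtain ⟨i, hi⟩ := P.exists_eq_gaussNorm (NormedField.toAbsoluteValue k) r
    rw [NormedField.toAbsoluteValue_apply] at hi
    rcases le_or_gt i P.natDegree with hle | hlt
    · exact ⟨i, hle, hi.symm⟩
    · -- the Gauss norm vanishes, so it is attained at every index
      rw [coeff_eq_zero_of_natDegree_lt hlt, norm_zero, zero_mul] at hi
      refine ⟨0, Nat.zero_le _, le_antisymm (norm_coeff_mul_pow_le_gaussNorm hr 0) ?_⟩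
      rw [hi]
      positivity
  obtain ⟨i, hle, hi⟩ := hattained
  exact Nat.findGreatest_spec
    (P := fun j ↦ ‖P.coeff j‖ * r ^ j = P.gaussNorm (NormedField.toAbsoluteValue k) r) hle hi

theorem norm_coeff_mul_pow_lt_of_dominantDegree_lt (hr : 0 < r) (hP : P ≠ 0) {i : ℕ}
    (hi : dominantDegree r P < i) :
    ‖P.coeff i‖ * r ^ i < P.gaussNorm (NormedField.toAbsoluteValue k) r := by
  rcases le_or_gt i P.natDegree with hle | hlt
  · exact (norm_coeff_mul_pow_le_gaussNorm hr.le i).lt_of_ne (Nat.findGreatest_is_greatest hi hle)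
  · rw [coeff_eq_zero_of_natDegree_lt hlt, norm_zero, zero_mul]
    exact gaussNorm_pos hr hP

theorem coeff_dominantDegree_ne_zero (hr : 0 < r) (hP : P ≠ 0) :
    P.coeff (dominantDegree r P) ≠ 0 := by
  intro h
  have h' := norm_coeff_dominantDegree_mul_pow (P := P) hr.le
  rw [h, norm_zero, zero_mul] at h'
  exact (gaussNorm_pos hr hP).ne h'

def ConstCoeffDominates (r : ℝ) (P : k[X]) : Prop :=
  ∀ i, 1 ≤ i → ‖P.coeff i‖ * r ^ i < ‖P.coeff 0‖

theorem constCoeffDominates_of_dominantDegree_eq_zero (hr : 0 < r) (hP : P ≠ 0)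
    (h : dominantDegree r P = 0) : ConstCoeffDominates r P := by
  intro i hi
  have hnorm := norm_coeff_dominantDegree_mul_pow (P := P) hr.le
  rw [h, pow_zero, mul_one] at hnorm
  rw [hnorm]
  exact norm_coeff_mul_pow_lt_of_dominantDegree_lt hr hP (h ▸ hi)

theorem constCoeffDominates_C {c : k} (hc : c ≠ 0) : ConstCoeffDominates r (C c) := by
  intro i hi
  rw [coeff_C_of_ne_zero (by omega), coeff_C_zero, norm_zero, zero_mul]
  exact norm_pos_iff.mpr hc

section Ultrametric

variable [IsUltrametricDist k]

theorem ConstCoeffDominates.eval_ne_zero (h : ConstCoeffDominates r P) {x : k} (hx : ‖x‖ ≤ r) :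
    P.eval x ≠ 0 := by
  have hr : 0 ≤ r := (norm_nonneg x).trans hx
  have hsum : ‖P.eval x‖ = ‖P.coeff 0 * x ^ 0‖ := by
    rw [eval_eq_sum_range]
    refine IsNonarchimedean.apply_sum_eq_of_lt IsUltrametricDist.isNonarchimedean_norm
      (fun _ ↦ (norm_neg _).symm) (Finset.mem_range.mpr P.natDegree.succ_pos) fun i _ hi ↦ ?_
    calc ‖P.coeff i * x ^ i‖ = ‖P.coeff i‖ * ‖x‖ ^ i := by rw [norm_mul, norm_pow]
      _ ≤ ‖P.coeff i‖ * r ^ i := by gcongr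
      _ < ‖P.coeff 0 * x ^ 0‖ := by
        rw [pow_zero, mul_one]
        exact h i (Nat.one_le_iff_ne_zero.mpr hi)
  rw [← norm_ne_zero_iff, hsum, pow_zero, mul_one]
  exact ((by positivity : 0 ≤ ‖P.coeff 1‖ * r ^ 1).trans_lt (h 1 le_rfl)).ne'

theorem ConstCoeffDominates.X_sub_C_mul (hr : 0 ≤ r) {Q : k[X]} (hQ : ConstCoeffDominates r Q)
    {ρ : k} (hρ : r < ‖ρ‖) : ConstCoeffDominates r ((X - C ρ) * Q) := by
  have hQ0 : 0 < ‖Q.coeff 0‖ := (by positivity : 0 ≤ ‖Q.coeff 1‖ * r ^ 1).trans_lt (hQ 1 le_rfl)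
  have hQle : ∀ j, ‖Q.coeff j‖ * r ^ j ≤ ‖Q.coeff 0‖ := fun j ↦ by
    rcases j.eq_zero_or_pos with rfl | hj
    · simp
    · exact (hQ j hj).le
  have hcoeff0 : ((X - C ρ) * Q).coeff 0 = -(ρ * Q.coeff 0) := by
    simp [sub_mul, mul_coeff_zero]
  intro i hi
  obtain ⟨j, rfl⟩ : ∃ j, i = j + 1 := ⟨i - 1, by omega⟩
  have hcoeff : ((X - C ρ) * Q).coeff (j + 1) = Q.coeff j + -(ρ * Q.coeff (j + 1)) := by
    rw [sub_mul, coeff_sub, coeff_X_mul, coeff_C_mul, sub_eq_add_neg]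
  have hfirst : ‖Q.coeff j‖ * r ^ (j + 1) < ‖ρ‖ * ‖Q.coeff 0‖ :=
    calc ‖Q.coeff j‖ * r ^ (j + 1) = ‖Q.coeff j‖ * r ^ j * r := by ring
      _ ≤ ‖Q.coeff 0‖ * r := by gcongr; exact hQle j
      _ < ‖ρ‖ * ‖Q.coeff 0‖ := by rw [mul_comm]; gcongr
  have hsecond : ‖-(ρ * Q.coeff (j + 1))‖ * r ^ (j + 1) < ‖ρ‖ * ‖Q.coeff 0‖ := by
    rw [norm_neg, norm_mul, mul_assoc]
    exact mul_lt_mul_of_pos_left (hQ (j + 1) (by omega)) (hr.trans_lt hρ)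
  rw [hcoeff, hcoeff0, norm_neg, norm_mul]
  calc ‖Q.coeff j + -(ρ * Q.coeff (j + 1))‖ * r ^ (j + 1)
      ≤ max ‖Q.coeff j‖ ‖-(ρ * Q.coeff (j + 1))‖ * r ^ (j + 1) := by
        gcongr
        exact IsUltrametricDist.norm_add_le_max _ _
    _ < ‖ρ‖ * ‖Q.coeff 0‖ := by
        rw [max_mul_of_nonneg _ _ (by positivity)]
        exact max_lt hfirst hsecond

theorem constCoeffDominates_C_mul_prod_X_sub_C (hr : 0 ≤ r) {c : k} (hc : c ≠ 0)
    {s : Multiset k} (hs : ∀ ρ ∈ s, r < ‖ρ‖) :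
    ConstCoeffDominates r (C c * (s.map fun ρ ↦ X - C ρ).prod) := by
  induction s using Multiset.induction_on with
  | empty => simpa using constCoeffDominates_C hc
  | cons ρ s ih =>
    rw [Multiset.map_cons, Multiset.prod_cons, mul_left_comm]
    exact (ih fun σ hσ ↦ hs σ (Multiset.mem_cons_of_mem hσ)).X_sub_C_mul hr
      (hs ρ (Multiset.mem_cons_self ρ s))

theorem constCoeffDominates_of_forall_eval_ne_zero [IsAlgClosed k] (hr : 0 ≤ r)
    (h : ∀ x : k, ‖x‖ ≤ r → P.eval x ≠ 0) : ConstCoeffDominates r P := by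
  have hP : P ≠ 0 := by
    rintro rfl
    exact h 0 (by simpa using hr) eval_zero
  rw [← C_leadingCoeff_mul_prod_multiset_X_sub_C (IsAlgClosed.card_roots_eq_natDegree (p := P))]
  refine constCoeffDominates_C_mul_prod_X_sub_C hr (leadingCoeff_ne_zero.mpr hP) fun ρ hρ ↦ ?_
  by_contra! hle
  exact h ρ hle (isRoot_of_mem_roots hρ)

theorem norm_wronskian_term_mul_pow_le (hr : 0 ≤ r) (u v : k[X]) (i j : ℕ) :
    ‖((j : k) - i) * (u.coeff i * v.coeff j)‖ * r ^ (i + j) ≤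
      ‖u.coeff i‖ * r ^ i * (‖v.coeff j‖ * r ^ j) := by
  have hcast : ‖(j : k) - i‖ ≤ 1 := by
    simpa using IsUltrametricDist.norm_intCast_le_one k ((j : ℤ) - i)
  calc ‖((j : k) - i) * (u.coeff i * v.coeff j)‖ * r ^ (i + j)
      = ‖(j : k) - i‖ * (‖u.coeff i‖ * r ^ i * (‖v.coeff j‖ * r ^ j)) := by
        rw [norm_mul, norm_mul, pow_add]; ring
    _ ≤ ‖u.coeff i‖ * r ^ i * (‖v.coeff j‖ * r ^ j) :=
        mul_le_of_le_one_left (by positivity) hcast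

theorem norm_coeff_wronskian_mul_pow_le (hr : 0 ≤ r) (u v : k[X]) (s : ℕ) :
    ‖(wronskian u v).coeff s‖ * r ^ (s + 1) ≤
      u.gaussNorm (NormedField.toAbsoluteValue k) r *
        v.gaussNorm (NormedField.toAbsoluteValue k) r := by
  obtain ⟨x, hx, hle⟩ := IsUltrametricDist.exists_norm_finsetSum_le_of_nonempty
    (⟨(0, s + 1), by simp⟩ : (antidiagonal (s + 1)).Nonempty)
    fun x ↦ ((x.2 : k) - x.1) * (u.coeff x.1 * v.coeff x.2)
  rw [coeff_wronskian]
  calc _ ≤ ‖((x.2 : k) - x.1) * (u.coeff x.1 * v.coeff x.2)‖ * r ^ (s + 1) := by gcongr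
    _ = ‖((x.2 : k) - x.1) * (u.coeff x.1 * v.coeff x.2)‖ * r ^ (x.1 + x.2) := by
        rw [mem_antidiagonal.mp hx]
    _ ≤ ‖u.coeff x.1‖ * r ^ x.1 * (‖v.coeff x.2‖ * r ^ x.2) :=
        norm_wronskian_term_mul_pow_le hr u v x.1 x.2
    _ ≤ _ := mul_le_mul (norm_coeff_mul_pow_le_gaussNorm hr _)
        (norm_coeff_mul_pow_le_gaussNorm hr _) (by positivity) (gaussNorm_nonneg _ _ hr)

/-- Only the pair of dominant indices contributes a term of full size to this coefficient. -/
theorem norm_coeff_wronskian_mul_pow_eq (hr : 0 < r) {u v : k[X]} (hu : u ≠ 0) (hv : v ≠ 0)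
    (hpq : ‖(dominantDegree r v : k) - dominantDegree r u‖ = 1) {s : ℕ}
    (hs : s + 1 = dominantDegree r u + dominantDegree r v) :
    ‖(wronskian u v).coeff s‖ * r ^ (s + 1) =
      u.gaussNorm (NormedField.toAbsoluteValue k) r *
        v.gaussNorm (NormedField.toAbsoluteValue k) r := by
  set p := dominantDegree r u
  set q := dominantDegree r v
  set term : ℕ × ℕ → k := fun x ↦ ((x.2 : k) - x.1) * (u.coeff x.1 * v.coeff x.2)
  have hterm : ‖term (p, q)‖ * r ^ (s + 1) =
      u.gaussNorm (NormedField.toAbsoluteValue k) r *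
        v.gaussNorm (NormedField.toAbsoluteValue k) r := by
    simp only [term, norm_mul, hpq, one_mul, hs, pow_add]
    rw [← norm_coeff_dominantDegree_mul_pow hr.le, ← norm_coeff_dominantDegree_mul_pow hr.le]
    ring
  have hsmall : ∀ x ∈ antidiagonal (s + 1), x ≠ (p, q) →
      ‖term x‖ * r ^ (s + 1) < ‖term (p, q)‖ * r ^ (s + 1) := by
    intro x hx hne
    have hsum := mem_antidiagonal.mp hx
    rw [hterm, ← hsum]
    refine (norm_wronskian_term_mul_pow_le hr.le u v x.1 x.2).trans_lt ?_
    rcases lt_or_gt_of_ne (fun h : x.1 = p ↦ hne (Prod.ext h (by omega))) with hlt | hgt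
    · exact (mul_le_mul_of_nonneg_right (norm_coeff_mul_pow_le_gaussNorm hr.le _)
        (by positivity)).trans_lt
        (mul_lt_mul_of_pos_left (norm_coeff_mul_pow_lt_of_dominantDegree_lt hr hv (by omega))
          (gaussNorm_pos hr hu))
    · exact (mul_le_mul_of_nonneg_left (norm_coeff_mul_pow_le_gaussNorm hr.le _)
        (by positivity)).trans_lt
        (mul_lt_mul_of_pos_right (norm_coeff_mul_pow_lt_of_dominantDegree_lt hr hu hgt)
          (gaussNorm_pos hr hv))
  rw [coeff_wronskian, ← hterm]
  congr 1
  exact IsNonarchimedean.apply_sum_eq_of_lt IsUltrametricDist.isNonarchimedean_norm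
    (fun _ ↦ (norm_neg _).symm) (mem_antidiagonal.mpr hs.symm)
    fun x hx hne ↦ lt_of_mul_lt_mul_right (hsmall x hx hne) (by positivity)

theorem exists_eval_wronskian_eq_zero_of_dominantDegree [IsAlgClosed k] (hr : 0 < r)
    {u v : k[X]} (hu : u ≠ 0) (hv : v ≠ 0)
    (hpq : ‖(dominantDegree r v : k) - dominantDegree r u‖ = 1)
    (htwo : 2 ≤ dominantDegree r u + dominantDegree r v) :
    ∃ x : k, ‖x‖ ≤ r ∧ (wronskian u v).eval x = 0 := by
  by_contra! hW
  set s := dominantDegree r u + dominantDegree r v - 1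
  have hdom := constCoeffDominates_of_forall_eval_ne_zero hr.le hW s (by omega)
  have hfull := norm_coeff_wronskian_mul_pow_eq hr hu hv hpq (s := s) (by omega)
  have hconst := norm_coeff_wronskian_mul_pow_le hr.le u v 0
  rw [zero_add, pow_one] at hconst
  refine lt_irrefl (‖(wronskian u v).coeff s‖ * r ^ (s + 1)) ?_
  calc ‖(wronskian u v).coeff s‖ * r ^ (s + 1)
      = ‖(wronskian u v).coeff s‖ * r ^ s * r := by ring
    _ < ‖(wronskian u v).coeff 0‖ * r := mul_lt_mul_of_pos_right hdom hr
    _ ≤ _ := hconst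
    _ = _ := hfull.symm

theorem one_le_dominantDegree_of_eval_eq_zero (hr : 0 < r) (hP : P ≠ 0) {x : k} (hx : ‖x‖ ≤ r)
    (h : P.eval x = 0) : 1 ≤ dominantDegree r P := by
  by_contra! h0
  exact (constCoeffDominates_of_dominantDegree_eq_zero hr hP (by omega)).eval_ne_zero hx h

/-- Replacing `v` by `v - λ u`, with `λ` killing the coefficient of `v` at the dominant degree of
`u`, makes the two dominant degrees distinct; both are positive because every member of the pencil
vanishes somewhere in the disk. -/
theorem exists_eval_wronskian_eq_zero_of_pencil_roots_near_zero [IsAlgClosed k] (hr : 0 ≤ r)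
    {u v : k[X]} (hu : u ≠ 0) (hv : ∀ c, v ≠ C c * u)
    (hres : ∀ q : ℕ, q.Prime → q ≤ max u.natDegree v.natDegree → ‖(q : k)‖ = 1)
    (hroot : ∀ s t : k, ∃ x : k, ‖x‖ ≤ r ∧ (C s * u + C t * v).eval x = 0) :
    ∃ x : k, ‖x‖ ≤ r ∧ (wronskian u v).eval x = 0 := by
  rcases hr.eq_or_lt with rfl | hr
  · obtain ⟨x, hx, hux⟩ := hroot 1 0
    obtain ⟨y, hy, hvy⟩ := hroot 0 1
    rw [norm_le_zero_iff] at hx hy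
    subst hx hy
    refine ⟨0, norm_zero.le, ?_⟩
    simp_all [wronskian]
  set p := dominantDegree r u
  set w := v - C (v.coeff p / u.coeff p) * u
  have hw : w ≠ 0 := sub_ne_zero.mpr (hv _)
  have hwp : w.coeff p = 0 := by
    rw [coeff_sub, coeff_C_mul, div_mul_cancel₀ _ (coeff_dominantDegree_ne_zero hr hu), sub_self]
  have hpu : 1 ≤ p := by
    obtain ⟨x, hx, hux⟩ := hroot 1 0
    exact one_le_dominantDegree_of_eval_eq_zero hr hu hx (by simpa using hux)
  have hpw : 1 ≤ dominantDegree r w := by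
    obtain ⟨x, hx, hwx⟩ := hroot (-(v.coeff p / u.coeff p)) 1
    refine one_le_dominantDegree_of_eval_eq_zero hr hw hx ?_
    simpa [w, sub_eq_neg_add] using hwx
  have hne : dominantDegree r w ≠ p := fun h ↦ coeff_dominantDegree_ne_zero hr hw (h ▸ hwp)
  have hwdeg : w.natDegree ≤ max u.natDegree v.natDegree :=
    (natDegree_sub_le _ _).trans (max_le (le_max_right _ _)
      ((natDegree_C_mul_le _ _).trans (le_max_left _ _)))
  have hpq := norm_natCast_sub_natCast_eq_one_of_forall_prime hres
    (dominantDegree_le_natDegree.trans hwdeg)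
    (dominantDegree_le_natDegree.trans (le_max_left _ _)) hne
  obtain ⟨x, hx, hWx⟩ := exists_eval_wronskian_eq_zero_of_dominantDegree hr hu hw hpq (by omega)
  exact ⟨x, hx, by rwa [wronskian_sub_C_mul_right] at hWx⟩

theorem exists_eval_wronskian_eq_zero_of_pencil_roots [IsAlgClosed k] (a : k) (hr : 0 ≤ r)
    {u v : k[X]} (hu : u ≠ 0) (hv : ∀ c, v ≠ C c * u)
    (hres : ∀ q : ℕ, q.Prime → q ≤ max u.natDegree v.natDegree → ‖(q : k)‖ = 1)
    (hroot : ∀ s t : k, ∃ x : k, ‖x - a‖ ≤ r ∧ (C s * u + C t * v).eval x = 0) :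
    ∃ x : k, ‖x - a‖ ≤ r ∧ (wronskian u v).eval x = 0 := by
  obtain ⟨x, hx, hWx⟩ := exists_eval_wronskian_eq_zero_of_pencil_roots_near_zero hr
    (u := taylor a u) (v := taylor a v) ((taylor_eq_zero a u).not.mpr hu)
    (fun c h ↦ hv c (taylor_injective a (by rwa [taylor_mul, taylor_C])))
    (by simpa only [natDegree_taylor] using hres)
    fun s t ↦ by
      obtain ⟨x, hx, hux⟩ := hroot s t
      refine ⟨x - a, hx, ?_⟩
      rwa [← taylor_C a s, ← taylor_C a t, ← taylor_mul, ← taylor_mul, ← map_add, taylor_eval,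
        sub_add_cancel]
  rw [wronskian_taylor, taylor_eval] at hWx
  exact ⟨x + a, by rwa [add_sub_cancel_right], hWx⟩

end Ultrametric

end Polynomial

end NormedField

theorem stmt9_general {k : Type*} [NormedField k] [IsAlgClosed k]
    [IsUltrametricDist k]
    (f g : Polynomial k) (hco : IsCoprime f g)
    (hd : 1 ≤ max f.natDegree g.natDegree)
    (hres : ∀ q : ℕ, q.Prime → q ≤ max f.natDegree g.natDegree → ‖(q : k)‖ = 1)
    (a : k) (r : ℝ) (hr : 0 ≤ r)
    (honto : ∀ w : k, ∃ x : k, ‖x - a‖ ≤ r ∧ f.eval x = w * g.eval x)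
    (hinfty : ∃ x : k, ‖x - a‖ ≤ r ∧ g.eval x = 0) :
    ∃ c : k, ‖c - a‖ ≤ r ∧ (derivative f * g - f * derivative g).eval c = 0 := by
  rw [max_comm] at hd hres
  obtain ⟨hg, hf⟩ := hco.symm.ne_zero_and_forall_ne_C_mul hd
  have hW : derivative f * g - f * derivative g = wronskian g f := by
    rw [wronskian]; ring
  rw [hW]
  exact exists_eval_wronskian_eq_zero_of_pencil_roots a hr hg hf hres
    (exists_eval_C_mul_add_C_mul_eq_zero honto hinfty)

/-- Application 2, case of residue characteristic `0` or `> d`: if `φ = f/g` maps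
the closed disk `D(a,r)` onto all of `P¹(k)`, then it has a critical point in the
same closed disk. -/
theorem stmt9 {k : Type*} [NormedField k] [IsAlgClosed k] [CharZero k]
    [CompleteSpace k] [IsUltrametricDist k]
    (f g : Polynomial k) (hco : IsCoprime f g)
    (hd : 1 ≤ max f.natDegree g.natDegree)
    (hres : ∀ q : ℕ, q.Prime → q ≤ max f.natDegree g.natDegree → ‖(q : k)‖ = 1)
    (a : k) (r : ℝ) (hr : 0 ≤ r)
    (honto : ∀ w : k, ∃ x : k, ‖x - a‖ ≤ r ∧ f.eval x = w * g.eval x)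
    (hinfty : ∃ x : k, ‖x - a‖ ≤ r ∧ g.eval x = 0) :
    ∃ c : k, ‖c - a‖ ≤ r ∧ (derivative f * g - f * derivative g).eval c = 0 :=
  stmt9_general f g hco hd hres a r hr honto hinfty
end

section
/- Let k be an algebraically closed field equipped with a non-Archimedean (ultrametric) multiplicative norm ‖·‖, and let P ∈ k[X]. If P.eval x ≠ 0 for every x ∈ k with ‖x‖ < 1 (P has no root in the open unit disk), then ‖P.coeff ℓ‖ ≤ ‖P.coeff 0‖ for every natural number ℓ. -/
open Polynomial

private theorem stmt10_aux {k : Type*} [NormedField k] [IsAlgClosed k] [IsUltrametricDist k]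
    (n : ℕ) : ∀ (P : Polynomial k), P.natDegree = n →
    (∀ x : k, ‖x‖ < 1 → P.eval x ≠ 0) → ∀ ℓ : ℕ, ‖P.coeff ℓ‖ ≤ ‖P.coeff 0‖ := by
  induction n with
  | zero =>
    intro P hdeg hroot ℓ
    rcases Nat.eq_zero_or_pos ℓ with rfl | hℓ
    · exact le_refl _
    · rw [P.coeff_eq_zero_of_natDegree_lt (by omega)]
      simp
  | succ n ih =>
    intro P hdeg hroot ℓ
    have hP0 : P ≠ 0 := by
      intro h
      exact hroot 0 (by norm_num) (by simp [h])
    obtain ⟨r, hr⟩ := IsAlgClosed.exists_root P (by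
      rw [Polynomial.degree_eq_natDegree hP0, hdeg]; exact_mod_cast Nat.succ_ne_zero n)
    have hrnorm : (1 : ℝ) ≤ ‖r‖ := by
      by_contra h
      exact hroot r (not_le.mp h) hr
    obtain ⟨Q, hQ⟩ := (Polynomial.dvd_iff_isRoot.mpr hr)
    have hQ0 : Q ≠ 0 := by rintro rfl; simp at hQ; exact hP0 hQ
    have hQdeg : Q.natDegree = n := by
      have := Polynomial.natDegree_mul (Polynomial.X_sub_C_ne_zero r) hQ0
      rw [← hQ, hdeg, Polynomial.natDegree_X_sub_C] at this
      omega
    have hQroot : ∀ x : k, ‖x‖ < 1 → Q.eval x ≠ 0 := by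
      intro x hx hQx
      exact hroot x hx (by rw [hQ]; simp [hQx])
    have ihQ := ih Q hQdeg hQroot
    have hc0 : ‖P.coeff 0‖ = ‖r‖ * ‖Q.coeff 0‖ := by
      rw [hQ, Polynomial.mul_coeff_zero]
      simp [norm_mul]
    rcases Nat.eq_zero_or_pos ℓ with rfl | hℓ
    · exact le_refl _
    obtain ⟨m, rfl⟩ := Nat.exists_eq_add_of_lt hℓ
    simp only [Nat.zero_add]
    have hcoeff : P.coeff (m + 1) = Q.coeff m - r * Q.coeff (m + 1) := by
      rw [hQ, sub_mul, Polynomial.coeff_sub, Polynomial.coeff_X_mul]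
      simp [Polynomial.coeff_C_mul]
    rw [hcoeff, hc0, sub_eq_add_neg]
    refine (IsUltrametricDist.norm_add_le_max _ _).trans (max_le ?_ ?_)
    · calc ‖Q.coeff m‖ ≤ ‖Q.coeff 0‖ := ihQ m
        _ ≤ ‖r‖ * ‖Q.coeff 0‖ := le_mul_of_one_le_left (norm_nonneg _) hrnorm
    · rw [norm_neg, norm_mul]
      exact mul_le_mul_of_nonneg_left (ihQ (m + 1)) (norm_nonneg _)

/-- Newton-polygon coefficient domination: over an algebraically closed
non-Archimedean normed field, a polynomial with no root in the open unit disk has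
its constant coefficient dominating all other coefficients in absolute value. -/
theorem stmt10 {k : Type*} [NormedField k] [IsAlgClosed k] [IsUltrametricDist k]
    (P : Polynomial k) (hroot : ∀ x : k, ‖x‖ < 1 → P.eval x ≠ 0) (ℓ : ℕ) :
    ‖P.coeff ℓ‖ ≤ ‖P.coeff 0‖ :=
  stmt10_aux P.natDegree P rfl hroot ℓ
end

section
/- Let p be a prime and m ≥ 2 a natural number with p ∣ m. Then for every s with 2 ≤ s ≤ m, one has (p − 1) · padicValRat p ((m.choose s : ℚ) / m) ≥ −(s − 1) (i.e., ord_p(C(m,s)/m)/(s−1) ≥ −1/(p−1)), and equality holds at s = p: padicValRat p ((m.choose p : ℚ) / m) = −1. In other words, min_{2 ≤ s ≤ m} ord_p(C(m,s)/m)/(s−1) = −1/(p−1), attained at s = p. -/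
/-!
Since `C(m, s) / m = C(m - 1, s - 1) / s`, the valuation of `C(m, s) / m` is at least
`-ord_p s`, and `p ^ ord_p s ≤ s` together with Bernoulli's inequality gives
`(p - 1) ord_p s ≤ s - 1`. For `s = p` and `p ∣ m`, Lucas' theorem gives
`C(m - 1, p - 1) ≡ C(p - 1, p - 1) = 1 (mod p)`, so the valuation is exactly `-ord_p p = -1`.
-/

lemma choose_div_eq_choose_pred_div {m s : ℕ} (hs : 0 < s) (hsm : s ≤ m) :
    (m.choose s : ℚ) / m = ((m - 1).choose (s - 1) : ℚ) / s := by
  obtain ⟨n, rfl⟩ : ∃ n, m = n + 1 := ⟨m - 1, by omega⟩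
  obtain ⟨k, rfl⟩ : ∃ k, s = k + 1 := ⟨s - 1, by omega⟩
  have h := congrArg (fun x : ℕ => (x : ℚ)) (Nat.add_one_mul_choose_eq n k)
  push_cast at h
  simp only [Nat.add_sub_cancel, Nat.cast_add, Nat.cast_one]
  field_simp
  linarith

lemma padicValRat_choose_div {p m s : ℕ} [Fact p.Prime] (hs : 0 < s) (hsm : s ≤ m) :
    padicValRat p ((m.choose s : ℚ) / m) =
      (padicValNat p ((m - 1).choose (s - 1)) : ℤ) - padicValNat p s := by
  have hchoose : ((m - 1).choose (s - 1) : ℚ) ≠ 0 := by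
    exact_mod_cast (Nat.choose_pos (by omega)).ne'
  have hs' : (s : ℚ) ≠ 0 := by exact_mod_cast hs.ne'
  rw [choose_div_eq_choose_pred_div hs hsm, padicValRat.div hchoose hs',
    padicValRat.of_nat, padicValRat.of_nat]

lemma sub_one_mul_padicValNat_le {p s : ℕ} (hs : s ≠ 0) :
    ((p : ℤ) - 1) * padicValNat p s ≤ (s : ℤ) - 1 := by
  have hpow : p ^ padicValNat p s ≤ s := Nat.le_of_dvd (Nat.pos_of_ne_zero hs) pow_padicValNat_dvd
  have hbernoulli := one_add_mul_sub_le_pow (a := (p : ℤ)) (by omega) (padicValNat p s)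
  have : (p : ℤ) ^ padicValNat p s ≤ s := by exact_mod_cast hpow
  linarith

lemma not_dvd_choose_pred_pred {p m : ℕ} [hp : Fact p.Prime] (hm : 0 < m) (hpm : p ∣ m) :
    ¬ p ∣ (m - 1).choose (p - 1) := by
  have hp1 := hp.out.one_lt
  have hmod : (m - 1) % p = p - 1 := by
    obtain ⟨t, rfl⟩ := hpm
    obtain ⟨u, rfl⟩ : ∃ u, t = u + 1 := Nat.exists_eq_add_one.mpr (Nat.pos_of_mul_pos_left hm)
    rw [show p * (u + 1) - 1 = p - 1 + p * u by rw [mul_add]; omega, Nat.add_mul_mod_self_left]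
    exact Nat.mod_eq_of_lt (by omega)
  have hlucas := Choose.choose_modEq_choose_mod_mul_choose_div_nat (n := m - 1) (k := p - 1) (p := p)
  rw [hmod, Nat.mod_eq_of_lt (by omega : p - 1 < p), Nat.div_eq_of_lt (by omega : p - 1 < p),
    Nat.choose_self, Nat.choose_zero_right, one_mul] at hlucas
  rw [Nat.dvd_iff_mod_eq_zero, hlucas, Nat.mod_eq_of_lt hp1]
  exact one_ne_zero

/-- Binomial-valuation lemma (Lemma 5.1), case `p ∣ m`:
`ord_p(C(m,s)/m)/(s−1) ≥ −1/(p−1)` for `2 ≤ s ≤ m`, with equality at `s = p`. -/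
theorem stmt12 (p m : ℕ) (hp : p.Prime) (hm : 2 ≤ m) (hpm : p ∣ m) :
    (∀ s : ℕ, 2 ≤ s → s ≤ m →
        -((s : ℤ) - 1) ≤ ((p : ℤ) - 1) * padicValRat p ((m.choose s : ℚ) / (m : ℚ))) ∧
      padicValRat p ((m.choose p : ℚ) / (m : ℚ)) = -1 := by
  have : Fact p.Prime := ⟨hp⟩
  refine ⟨fun s hs hsm => ?_, ?_⟩
  · rw [padicValRat_choose_div (by omega) hsm]
    have hvs := sub_one_mul_padicValNat_le (p := p) (s := s) (by omega)
    have hp1 : (0 : ℤ) ≤ (p : ℤ) - 1 := by have := hp.one_lt; omega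
    have hchoose := mul_nonneg hp1 (Int.natCast_nonneg (padicValNat p ((m - 1).choose (s - 1))))
    rw [mul_sub]
    linarith
  · have hunit := padicValNat.eq_zero_of_not_dvd (not_dvd_choose_pred_pred (by omega) hpm)
    rw [padicValRat_choose_div hp.pos (Nat.le_of_dvd (by omega) hpm), hunit,
      padicValNat.self hp.one_lt]
    norm_num
end

section
/- Let k be an algebraically closed field of characteristic zero equipped with a non-Archimedean multiplicative norm ‖·‖, and let p be a prime with ‖(p : k)‖ < 1. Then: (a) the polynomial X^p + X ∈ k[X] has p distinct roots, all of norm at most 1 (so φ(z) = z^p + z has p distinct zeros in the closed unit disk D(0,1)); and (b) every c ∈ k with (p : k)·c^(p−1) + 1 = 0 (i.e., every finite critical point of φ) satisfies ‖c‖ = ‖(p : k)‖^(−(1 : ℝ)/(p−1)). In particular, φ has no critical point in any closed disk D(0,R) with R < ‖(p : k)‖^(−1/(p−1)), so the radius r·γ_{p,d} = r·‖p‖^(−1/(p−1)) in Application 1 (and the bound 1/(p−1) in Theorem D) cannot be improved. -/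
open Polynomial

/-! Every root `x` of `X ^ p + X` satisfies `‖x‖ ^ p = ‖x‖`, so `‖x‖ ∈ {0, 1}`; the roots are
simple because a common root of `X ^ p + X` and its derivative `p X ^ (p - 1) + 1` would force
`(p : k) = 1`. A critical point `c` satisfies `‖p‖ ‖c‖ ^ (p - 1) = 1`, which determines `‖c‖`. -/

theorem Polynomial.natDegree_X_pow_add_X {R : Type*} [Semiring R] [Nontrivial R] {n : ℕ}
    (hn : 2 ≤ n) : (X ^ n + X : R[X]).natDegree = n := by
  rw [natDegree_add_eq_left_of_natDegree_lt] <;> simp only [natDegree_X_pow, natDegree_X]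
  omega

theorem Polynomial.derivative_X_pow_add_X {R : Type*} [CommSemiring R] (n : ℕ) :
    derivative (X ^ n + X : R[X]) = C (n : R) * X ^ (n - 1) + 1 := by
  rw [derivative_add, derivative_X_pow, derivative_X]

theorem Polynomial.nodup_roots_X_pow_add_X {K : Type*} [Field K] [CharZero K] {n : ℕ}
    (hn : 2 ≤ n) : (X ^ n + X : K[X]).roots.Nodup := by
  have hne : (X ^ n + X : K[X]) ≠ 0 := by
    intro h
    have := natDegree_X_pow_add_X (R := K) hn
    rw [h, natDegree_zero] at this
    omega
  classical
  rw [Multiset.nodup_iff_count_le_one]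
  intro x
  rw [count_roots, ← not_lt, one_lt_rootMultiplicity_iff_isRoot hne, derivative_X_pow_add_X]
  rintro ⟨hroot, hcrit⟩
  simp only [IsRoot, eval_add, eval_pow, eval_X, eval_mul, eval_C, eval_one] at hroot hcrit
  have hxn : x ^ n = x * x ^ (n - 1) := by rw [← pow_succ']; congr 1; omega
  -- multiplying the critical equation by `x` and using `x ^ n = -x` gives `(n - 1) x = 0`
  have hx : ((n : K) - 1) * x = 0 := by
    linear_combination (n : K) * hroot - x * hcrit - (n : K) * hxn
  rcases mul_eq_zero.mp hx with hn1 | hx0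
  · have : n = 1 := Nat.cast_eq_one.mp (sub_eq_zero.mp hn1)
    omega
  · rw [hx0, zero_pow (by omega), mul_zero, zero_add] at hcrit
    exact one_ne_zero hcrit

theorem norm_le_one_of_pow_add_self_eq_zero {K : Type*} [NormedDivisionRing K] {n : ℕ}
    (hn : 2 ≤ n) {x : K} (hx : x ^ n + x = 0) : ‖x‖ ≤ 1 := by
  have hnorm : ‖x‖ ^ n = ‖x‖ := by
    rw [← norm_pow, eq_neg_of_add_eq_zero_left hx, norm_neg]
  by_contra! hgt
  have := pow_lt_pow_right₀ hgt (show 1 < n by omega)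
  rw [hnorm, pow_one] at this
  exact this.false

theorem norm_eq_rpow_of_mul_pow_add_one_eq_zero {K : Type*} [NormedDivisionRing K] {a c : K}
    {m : ℕ} (hm : m ≠ 0) (h : a * c ^ m + 1 = 0) : ‖c‖ = ‖a‖ ^ (-(1 : ℝ) / m) := by
  have hprod : ‖a‖ * ‖c‖ ^ m = 1 := by
    rw [← norm_pow, ← norm_mul, eq_neg_of_add_eq_zero_left h, norm_neg, norm_one]
  have hpow : ‖c‖ ^ m = ‖a‖⁻¹ := eq_inv_of_mul_eq_one_right hprod
  rw [neg_div, one_div, Real.rpow_neg (norm_nonneg a), ← Real.inv_rpow (norm_nonneg a), ← hpow,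
    Real.pow_rpow_inv_natCast (norm_nonneg c) hm]

theorem stmt15_general {k : Type*} [NormedField k] [IsAlgClosed k] [CharZero k]
    (p : ℕ) (hp : p.Prime) :
    (Multiset.card (X ^ p + X : Polynomial k).roots = p ∧
      (X ^ p + X : Polynomial k).roots.Nodup ∧
      ∀ x ∈ (X ^ p + X : Polynomial k).roots, ‖x‖ ≤ 1) ∧
    ∀ c : k, (p : k) * c ^ (p - 1) + 1 = 0 →
      ‖c‖ = ‖(p : k)‖ ^ (-(1 : ℝ) / ((p : ℝ) - 1)) := by
  have hp2 := hp.two_le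
  refine ⟨⟨?_, nodup_roots_X_pow_add_X hp2, fun x hx => ?_⟩, fun c hc => ?_⟩
  · rw [IsAlgClosed.card_roots_eq_natDegree, natDegree_X_pow_add_X hp2]
  · refine norm_le_one_of_pow_add_self_eq_zero hp2 ?_
    simpa using isRoot_of_mem_roots hx
  · have := norm_eq_rpow_of_mul_pow_add_one_eq_zero (by omega) hc
    rwa [Nat.cast_sub hp.one_le, Nat.cast_one] at this

/-- Sharpness example (Example 7.1): `φ(z) = z^p + z` has `p` distinct zeros in the
closed unit disk (its root multiset has `p` elements and no repetitions), while
every finite critical point `c` (root of `p·z^(p−1) + 1`) satisfies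
`‖c‖ = ‖p‖^(−1/(p−1))`. -/
theorem stmt15 {k : Type*} [NormedField k] [IsAlgClosed k] [CharZero k]
    [IsUltrametricDist k]
    (p : ℕ) (hp : p.Prime) (hpk : ‖(p : k)‖ < 1) :
    (Multiset.card (X ^ p + X : Polynomial k).roots = p ∧
      (X ^ p + X : Polynomial k).roots.Nodup ∧
      ∀ x ∈ (X ^ p + X : Polynomial k).roots, ‖x‖ ≤ 1) ∧
    ∀ c : k, (p : k) * c ^ (p - 1) + 1 = 0 →
      ‖c‖ = ‖(p : k)‖ ^ (-(1 : ℝ) / ((p : ℝ) - 1)) :=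
  stmt15_general p hp
end
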